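/- The radial function f₀(r) = (r²−1)/(r²+1), viewed as the radial function z ↦ (|z|²−1)/(|z|²+1) on ℝ², satisfies Δf₀ + (8/(1+r²)²) f₀ = 0, and for a > 0 the rescaled function z ↦ f₀(a|z|) satisfies −Δ(f₀(a|z|)) = 8a²(a²|z|²−1)/(1+a²|z|²)³. -/

import Mathlib

open Real

/-- The standard Laplacian on `ℝ²`: sum of the two pure second partial derivatives. -/
noncomputable def lap (f : ℝ × ℝ → ℝ) (p : ℝ × ℝ) : ℝ :=
  deriv (deriv (fun s => f (s, p.2))) p.1 + deriv (deriv (fun s => f (p.1, s))) p.2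

/-- The radial function `f₀(r) = (r²−1)/(r²+1)` viewed as `z ↦ (|z|²−1)/(|z|²+1)` on `ℝ²`. -/
noncomputable def f0 (z : ℝ × ℝ) : ℝ := ((z.1 ^ 2 + z.2 ^ 2) - 1) / ((z.1 ^ 2 + z.2 ^ 2) + 1)

/-- The rescaled radial function `z ↦ f₀(a|z|)`. -/
noncomputable def f0a (a : ℝ) (z : ℝ × ℝ) : ℝ :=
  (a ^ 2 * (z.1 ^ 2 + z.2 ^ 2) - 1) / (a ^ 2 * (z.1 ^ 2 + z.2 ^ 2) + 1)

/-! Along each coordinate line, `z ↦ f₀(a|z|)` is the one-variable rational function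
`s ↦ (a²(s² + c) − 1)/(a²(s² + c) + 1)`, `c` the square of the other coordinate. Two applications of
the quotient rule give `Δ f₀(a|z|) = 8a²(1 − a²|z|²)/(1 + a²|z|²)³`, and both identities follow
algebraically, `f₀` being the case `a = 1`. -/

lemma hasDerivAt_mul_sq_add (b c x : ℝ) :
    HasDerivAt (fun s : ℝ => b * (s ^ 2 + c)) (b * (2 * x)) x := by
  simpa using ((hasDerivAt_pow 2 x).add_const c).const_mul b

noncomputable def radialSlice (a c s : ℝ) : ℝ :=
  (a ^ 2 * (s ^ 2 + c) - 1) / (a ^ 2 * (s ^ 2 + c) + 1)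

section radialSlice

variable {a c : ℝ}

lemma hasDerivAt_radialSlice (hc : 0 ≤ c) (x : ℝ) :
    HasDerivAt (radialSlice a c) (4 * a ^ 2 * x / (a ^ 2 * (x ^ 2 + c) + 1) ^ 2) x := by
  have hD : a ^ 2 * (x ^ 2 + c) + 1 ≠ 0 := by positivity
  have hq := hasDerivAt_mul_sq_add (a ^ 2) c x
  refine ((hq.sub_const 1).div (hq.add_const 1) hD).congr_deriv ?_
  field_simp
  ring

lemma deriv_radialSlice (hc : 0 ≤ c) :
    deriv (radialSlice a c) = fun x => 4 * a ^ 2 * x / (a ^ 2 * (x ^ 2 + c) + 1) ^ 2 :=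
  funext fun x => (hasDerivAt_radialSlice hc x).deriv

lemma hasDerivAt_deriv_radialSlice (hc : 0 ≤ c) (x : ℝ) :
    HasDerivAt (deriv (radialSlice a c))
      ((4 * a ^ 2 * (a ^ 2 * (x ^ 2 + c) + 1) - 16 * a ^ 4 * x ^ 2)
        / (a ^ 2 * (x ^ 2 + c) + 1) ^ 3) x := by
  have hD : a ^ 2 * (x ^ 2 + c) + 1 ≠ 0 := by positivity
  have hnum : HasDerivAt (fun s : ℝ => 4 * a ^ 2 * s) (4 * a ^ 2) x := by
    simpa using (hasDerivAt_id x).const_mul (4 * a ^ 2)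
  have hden := ((hasDerivAt_mul_sq_add (a ^ 2) c x).add_const 1).fun_pow 2
  rw [deriv_radialSlice hc]
  refine (hnum.div hden (pow_ne_zero 2 hD)).congr_deriv ?_
  field_simp
  ring

lemma deriv_deriv_radialSlice (hc : 0 ≤ c) (x : ℝ) :
    deriv (deriv (radialSlice a c)) x
      = (4 * a ^ 2 * (a ^ 2 * (x ^ 2 + c) + 1) - 16 * a ^ 4 * x ^ 2)
        / (a ^ 2 * (x ^ 2 + c) + 1) ^ 3 :=
  (hasDerivAt_deriv_radialSlice hc x).deriv

end radialSlice

lemma f0a_fst_slice (a : ℝ) (z : ℝ × ℝ) :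
    (fun s => f0a a (s, z.2)) = radialSlice a (z.2 ^ 2) := rfl

lemma f0a_snd_slice (a : ℝ) (z : ℝ × ℝ) :
    (fun s => f0a a (z.1, s)) = radialSlice a (z.1 ^ 2) := by
  ext s
  simp only [f0a, radialSlice, add_comm (z.1 ^ 2)]

lemma lap_f0a (a : ℝ) (z : ℝ × ℝ) :
    lap (f0a a) z = 8 * a ^ 2 * (1 - a ^ 2 * (z.1 ^ 2 + z.2 ^ 2))
      / (a ^ 2 * (z.1 ^ 2 + z.2 ^ 2) + 1) ^ 3 := by
  rw [lap, f0a_fst_slice, f0a_snd_slice, deriv_deriv_radialSlice (sq_nonneg _),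
    deriv_deriv_radialSlice (sq_nonneg _), add_comm (z.2 ^ 2)]
  have hD : a ^ 2 * (z.1 ^ 2 + z.2 ^ 2) + 1 ≠ 0 := by positivity
  field_simp
  ring

lemma f0_eq_f0a_one : f0 = f0a 1 := by
  ext z
  simp [f0, f0a]

/-- `f₀` satisfies `Δf₀ + (8/(1+r²)²) f₀ = 0`, and for `a > 0` the rescaled function `f₀(a|z|)`
satisfies `−Δ(f₀(a|z|)) = 8a²(a²|z|²−1)/(1+a²|z|²)³`. -/
theorem radial_comparison_function (z : ℝ × ℝ) :
    (lap f0 z + 8 / (1 + (z.1 ^ 2 + z.2 ^ 2)) ^ 2 * f0 z = 0) ∧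
    ∀ a : ℝ, 0 < a →
      -lap (f0a a) z =
        8 * a ^ 2 * (a ^ 2 * (z.1 ^ 2 + z.2 ^ 2) - 1) / (1 + a ^ 2 * (z.1 ^ 2 + z.2 ^ 2)) ^ 3 := by
  constructor
  · have hD : z.1 ^ 2 + z.2 ^ 2 + 1 ≠ 0 := by positivity
    rw [f0_eq_f0a_one, lap_f0a, f0a]
    field_simp
    ring
  · intro a _
    have hD : a ^ 2 * (z.1 ^ 2 + z.2 ^ 2) + 1 ≠ 0 := by positivity
    rw [lap_f0a]
    field_simp
    ring
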